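/- Let G be a directed graph. If the number of distinct directed cycles in G equals α̃(G), then the affine zero loci of the incidence ideal I(G) and of the strong incidence ideal Ĩ(G) in ℂ^{E(G)} coincide: {p : E(G) → ℂ | f(p) = 0 for all f ∈ I(G)} = {p : E(G) → ℂ | f(p) = 0 for all f ∈ Ĩ(G)}. -/
import Mathlib


open MvPolynomial

/-- The `l`-th elementary symmetric polynomial in the finite set `s` of variables
(`1` for `l = 0`, `0` for `l > |s|`). -/
noncomputable def esymmOf (R : Type) [CommRing R] {E : Type} (s : Finset E) (l : ℕ) :
    MvPolynomial E R :=
  ∑ t ∈ s.powersetCard l, ∏ x ∈ t, X x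

/-- The incidence ideal of the directed graph with edge-endpoint maps `src`, `tgt`:
the ideal generated by the incidence relations
`δ_{v,l} = e_l(edges out of v) - e_l(edges into v)` for all vertices `v` and all `l ≥ 1`
(for `l > k_v` the relation `δ_{v,l}` is the zero polynomial, so this ideal is generated by
the `δ_{v,l}` with `1 ≤ l ≤ k_v`). -/
noncomputable def incidenceIdeal (R : Type) [CommRing R] {V E : Type}
    [Fintype E] [DecidableEq V] (src tgt : E → V) : Ideal (MvPolynomial E R) :=
  Ideal.span {f | ∃ (v : V) (l : ℕ), 1 ≤ l ∧
    f = esymmOf R (Finset.univ.filter fun x => src x = v) l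
      - esymmOf R (Finset.univ.filter fun x => tgt x = v) l}

/-- The strong incidence ideal: generated, for each vertex `v`, by
`e_1(out) - e_1(in)` together with `e_l(out)` and `e_l(in)` for all `l ≥ 2`
(these vanish for `l` larger than the out-degree resp. in-degree). -/
noncomputable def strongIncidenceIdeal (R : Type) [CommRing R] {V E : Type}
    [Fintype E] [DecidableEq V] (src tgt : E → V) : Ideal (MvPolynomial E R) :=
  Ideal.span ({f | ∃ v : V,
      f = esymmOf R (Finset.univ.filter fun x => src x = v) 1
        - esymmOf R (Finset.univ.filter fun x => tgt x = v) 1} ∪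
    {f | ∃ (v : V) (l : ℕ), 2 ≤ l ∧
      (f = esymmOf R (Finset.univ.filter fun x => src x = v) l ∨
       f = esymmOf R (Finset.univ.filter fun x => tgt x = v) l)})

/-- The affine zero locus in `ℂ^E` of an ideal of `ℤ[E]`. -/
def zeroLocus {E : Type} (I : Ideal (MvPolynomial E ℤ)) : Set (E → ℂ) :=
  {p | ∀ f ∈ I, MvPolynomial.aeval p f = 0}

/-- A directed cycle in the directed graph with edge-endpoint maps `src`, `tgt`:
pairwise distinct vertices `v_0, …, v_n` and edges `x_0, …, x_n` with `x_i` going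
from `v_i` to `v_{i+1}` (indices mod `n+1`). -/
structure DirCycle {V E : Type} (src tgt : E → V) where
  n : ℕ
  vtx : ZMod (n + 1) → V
  edge : ZMod (n + 1) → E
  vtx_inj : Function.Injective vtx
  edge_src : ∀ i, src (edge i) = vtx i
  edge_tgt : ∀ i, tgt (edge i) = vtx (i + 1)

/-- `C` is the set of edges of a directed cycle.  (A directed cycle, considered up to
cyclic permutation, is uniquely determined by its set of edges.) -/
def IsCycle {V E : Type} (src tgt : E → V) (C : Set E) : Prop :=
  ∃ c : DirCycle src tgt, C = Set.range c.edge

/-- `α̃(G)`: the maximal number of pairwise (vertex-)disjoint directed cycles.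
(The vertex set of the directed cycle with edge set `C` is `src '' C`.) -/
noncomputable def strongCyclePacking {V E : Type} (src tgt : E → V) : ℕ :=
  sSup {k | ∃ f : Fin k → Set E, (∀ i, IsCycle src tgt (f i)) ∧
    ∀ i j, i ≠ j → Disjoint (src '' f i) (src '' f j)}

/-! ### Auxiliary lemmas on elementary symmetric functions of multisets -/

theorem esymm_cons' {R : Type*} [CommSemiring R] (a : R) (s : Multiset R) (l : ℕ) :
    (a ::ₘ s).esymm (l+1) = s.esymm (l+1) + a * s.esymm l := by
  simp [Multiset.esymm, Multiset.powersetCard_cons, Multiset.sum_map_mul_left, Multiset.map_map,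
    Function.comp]

theorem esymm_zero' {R : Type*} [CommSemiring R] (s : Multiset R) : s.esymm 0 = 1 := by
  simp [Multiset.esymm]

theorem esymm_filter {R : Type*} [CommRing R] [DecidableEq R] (s : Multiset R) (l : ℕ) :
    (s.filter (fun x => x ≠ 0)).esymm l = s.esymm l := by
  induction s using Multiset.induction generalizing l with
  | empty => simp
  | cons a s ih =>
    by_cases ha : a = 0
    · subst ha
      rw [Multiset.filter_cons_of_neg _ (by simp)]
      cases l with
      | zero => simp [esymm_zero']
      | succ l => rw [esymm_cons', ih, zero_mul, add_zero]
    · rw [Multiset.filter_cons_of_pos _ (by simpa)]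
      cases l with
      | zero => simp [esymm_zero']
      | succ l => rw [esymm_cons', esymm_cons', ih, ih]

theorem esymm_card {R : Type*} [CommSemiring R] (s : Multiset R) :
    s.esymm (Multiset.card s) = s.prod := by
  have h : s.powersetCard (Multiset.card s) = {s} := by
    have h1 : Multiset.card (s.powersetCard (Multiset.card s)) = 1 := by
      simp [Multiset.card_powersetCard]
    obtain ⟨a, ha⟩ := Multiset.card_eq_one.mp h1
    have hs : s ∈ s.powersetCard (Multiset.card s) := by
      rw [Multiset.mem_powersetCard]; exact ⟨le_refl s, rfl⟩
    rw [ha] at hs ⊢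
    rw [Multiset.mem_singleton.mp hs]
  simp [Multiset.esymm, h]

theorem esymm_eq_zero_of_lt {R : Type*} [CommSemiring R] (s : Multiset R) {l : ℕ}
    (h : Multiset.card s < l) : s.esymm l = 0 := by
  simp [Multiset.esymm, Multiset.powersetCard_eq_empty _ h]

theorem card_filter_ne_of_esymm_eq {R : Type*} [CommRing R] [IsDomain R] [DecidableEq R]
    {A B : Multiset R} (h : ∀ l, A.esymm l = B.esymm l) :
    Multiset.card (A.filter (fun x => x ≠ 0)) = Multiset.card (B.filter (fun x => x ≠ 0)) := by
  have key : ∀ (A B : Multiset R), (∀ l, A.esymm l = B.esymm l) →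
      Multiset.card (A.filter (fun x => x ≠ 0)) ≤ Multiset.card (B.filter (fun x => x ≠ 0)) := by
    intro A B h
    by_contra hlt
    push_neg at hlt
    have h1 : (B.filter (fun x => x ≠ 0)).esymm (Multiset.card (A.filter (fun x => x ≠ 0))) = 0 :=
      esymm_eq_zero_of_lt _ hlt
    have h2 : (A.filter (fun x => x ≠ 0)).esymm (Multiset.card (A.filter (fun x => x ≠ 0)))
        = (A.filter (fun x => x ≠ 0)).prod := esymm_card _
    rw [esymm_filter, h _, ← esymm_filter, h1] at h2
    exact Multiset.prod_ne_zero (by simp) h2.symm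
  exact le_antisymm (key A B h) (key B A (fun l => (h l).symm))

theorem aeval_esymmOf {E : Type} (s : Finset E) (l : ℕ) (p : E → ℂ) :
    MvPolynomial.aeval p (esymmOf ℤ s l) = (s.val.map p).esymm l := by
  rw [esymmOf, map_sum, Finset.esymm_map_val]
  apply Finset.sum_congr rfl
  intro t _
  rw [map_prod]
  simp

/-! ### Walks and cycles -/

theorem zmod_val_succ {n : ℕ} (i : ZMod (n+1)) : (i + 1).val = (i.val + 1) % (n+1) := by
  cases n with
  | zero =>
    have h1 : (i+1).val = 0 := by have := ZMod.val_lt (i+1); omega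
    have h2 : i.val = 0 := by have := ZMod.val_lt i; omega
    rw [h1, h2]
  | succ n =>
    rw [ZMod.val_add]
    have : (1 : ZMod (n+1+1)).val = 1 := ZMod.val_one_eq_one_mod (n+1+1) ▸ by
      simp [Nat.mod_eq_of_lt]
    rw [this]

theorem walk_cycle {V E : Type} (src tgt : E → V) (m : ℕ) (hm : 0 < m) (w : ℕ → E)
    (hw : ∀ k, k + 1 < m → tgt (w k) = src (w (k+1))) (hcl : tgt (w (m-1)) = src (w 0)) :
    ∃ c : DirCycle src tgt, (∃ i, c.edge i = w 0) ∧ (∀ i, ∃ k, k < m ∧ c.edge i = w k) := by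
  induction m using Nat.strong_induction_on generalizing w with
  | _ m ih =>
  by_cases hdis : ∀ a b, a < b → b < m → src (w a) ≠ src (w b)
  · -- the walk is a simple cycle
    obtain ⟨n, rfl⟩ : ∃ n, m = n + 1 := ⟨m - 1, (Nat.succ_pred_eq_of_pos hm).symm⟩
    refine ⟨⟨n, fun i => src (w i.val), fun i => w i.val, ?_, fun i => rfl, ?_⟩, ⟨0, ?_⟩, ?_⟩
    · intro i j hij
      rcases lt_trichotomy i.val j.val with hlt | heq | hgt
      · exact absurd hij (hdis _ _ hlt (ZMod.val_lt j))
      · exact ZMod.val_injective _ heq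
      · exact absurd hij.symm (hdis _ _ hgt (ZMod.val_lt i))
    · intro i
      show tgt (w i.val) = src (w ((i+1).val))
      rw [zmod_val_succ]
      rcases Nat.lt_or_ge (i.val + 1) (n+1) with hlt | hge
      · rw [Nat.mod_eq_of_lt hlt]; exact hw _ hlt
      · have h1 : i.val = n := by
          have := ZMod.val_lt i; omega
        have h2 : (i.val + 1) % (n+1) = 0 := by rw [h1]; exact Nat.mod_self _
        rw [h2, h1]
        simpa using hcl
    · show w (0 : ZMod (n+1)).val = w 0
      rw [ZMod.val_zero]
    · intro i
      exact ⟨i.val, ZMod.val_lt i, rfl⟩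
  · push_neg at hdis
    obtain ⟨a, b, hab, hbm, heq⟩ := hdis
    by_cases ha : a = 0
    · -- cut the segment [b, m)
      subst ha
      have hb1 : 0 < b := hab
      obtain ⟨c, hc1, hc2⟩ := ih b (by omega) hb1 w
        (fun k hk => hw k (by omega))
        (by
          have h3 := hw (b-1) (by omega)
          have e : b - 1 + 1 = b := by omega
          rw [e] at h3
          rw [h3, ← heq])
      exact ⟨c, hc1, fun i => by obtain ⟨k, hk, he⟩ := hc2 i; exact ⟨k, by omega, he⟩⟩
    · -- cut the segment [a, b)
      have ha1 : 0 < a := Nat.pos_of_ne_zero ha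
      set d := b - a with hd
      have hd1 : 0 < d := by omega
      set m' := m - d with hm'
      have hm'1 : a ≤ m' - 1 := by omega
      set w' : ℕ → E := fun k => if k < a then w k else w (k + d) with hw'
      have hw'0 : w' 0 = w 0 := by simp [hw', ha1]
      obtain ⟨c, hc1, hc2⟩ := ih m' (by omega) (by omega) w'
        (fun k hk => by
          by_cases hka : k + 1 < a
          · simp only [hw', if_pos hka, if_pos (by omega : k < a)]
            exact hw k (by omega)
          · by_cases hka' : k + 1 = a
            · simp only [hw', if_pos (by omega : k < a), if_neg (by omega : ¬ k + 1 < a)]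
              have : k + 1 + d = b := by omega
              rw [this, ← heq, ← hka']
              exact hw k (by omega)
            · simp only [hw', if_neg (by omega : ¬ k < a), if_neg (by omega : ¬ k + 1 < a)]
              have : k + 1 + d = k + d + 1 := by omega
              rw [this]
              exact hw (k + d) (by omega))
        (by
          simp only [hw', if_neg (by omega : ¬ m' - 1 < a), if_pos ha1]
          have : m' - 1 + d = m - 1 := by omega
          rw [this]
          exact hcl)
      rw [hw'0] at hc1
      refine ⟨c, hc1, fun i => ?_⟩
      obtain ⟨k, hk, he⟩ := hc2 i
      by_cases hka : k < a
      · exact ⟨k, by omega, by simpa [hw', hka] using he⟩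
      · exact ⟨k + d, by omega, by simpa [hw', hka] using he⟩

theorem exists_period {X : Type} [Finite X] (σ : X → X) (hσ : Function.Injective σ) (x : X) :
    ∃ m, 0 < m ∧ σ^[m] x = x := by
  obtain ⟨a, b, hne, heq⟩ := Finite.exists_ne_map_eq_of_infinite (fun k : ℕ => σ^[k] x)
  rcases hne.lt_or_gt with hab | hab
  · refine ⟨b - a, by omega, ?_⟩
    have : σ^[a] (σ^[b-a] x) = σ^[a] x := by
      rw [← Function.iterate_add_apply]
      rw [show a + (b - a) = b by omega]
      exact heq.symm
    exact (hσ.iterate a) this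
  · refine ⟨a - b, by omega, ?_⟩
    have : σ^[b] (σ^[a-b] x) = σ^[b] x := by
      rw [← Function.iterate_add_apply]
      rw [show b + (a - b) = a by omega]
      exact heq
    exact (hσ.iterate b) this

theorem card_fiber {V E : Type} [Fintype E] [DecidableEq V] [DecidableEq E]
    (H : Finset E) (f : E → V) (v : V) :
    Fintype.card {x : {x // x ∈ H} // f x.val = v} = (H.filter fun e => f e = v).card := by
  rw [← Fintype.card_coe]
  exact Fintype.card_congr ⟨fun x => ⟨x.val.val, Finset.mem_filter.mpr ⟨x.val.2, x.2⟩⟩,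
    fun e => ⟨⟨e.val, (Finset.mem_filter.mp e.2).1⟩, (Finset.mem_filter.mp e.2).2⟩,
    fun x => rfl, fun e => rfl⟩

theorem cycle_through {V E : Type} [Fintype E] [DecidableEq V] [DecidableEq E]
    (src tgt : E → V) (H : Finset E)
    (bal : ∀ v, (H.filter fun e => tgt e = v).card = (H.filter fun e => src e = v).card)
    {e : E} (he : e ∈ H) :
    ∃ c : DirCycle src tgt, ∃ i, c.edge i = e := by
  have hcard : ∀ v : V, Fintype.card {x : {x // x ∈ H} // tgt x.val = v}
      = Fintype.card {x : {x // x ∈ H} // src x.val = v} := by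
    intro v
    rw [card_fiber H tgt v, card_fiber H src v]; exact bal v
  let eqv : ∀ v : V, {x : {x // x ∈ H} // tgt x.val = v} ≃ {x : {x // x ∈ H} // src x.val = v} :=
    fun v => Fintype.equivOfCardEq (hcard v)
  let σ : {x // x ∈ H} → {x // x ∈ H} :=
    ((Equiv.sigmaFiberEquiv (fun x : {x // x ∈ H} => tgt x.val)).symm.trans
      ((Equiv.sigmaCongrRight eqv).trans
        (Equiv.sigmaFiberEquiv (fun x : {x // x ∈ H} => src x.val))))
  have hinj : Function.Injective σ :=
    ((Equiv.sigmaFiberEquiv _).symm.trans ((Equiv.sigmaCongrRight eqv).trans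
      (Equiv.sigmaFiberEquiv _))).injective
  have hσ : ∀ x, src (σ x).val = tgt x.val := fun x =>
    (eqv (tgt x.val) ⟨x, rfl⟩).property
  obtain ⟨m, hm, hper⟩ := exists_period σ hinj ⟨e, he⟩
  set w : ℕ → E := fun k => (σ^[k] ⟨e, he⟩).val with hwdef
  have hstep : ∀ k, tgt (w k) = src (w (k+1)) := by
    intro k
    rw [hwdef]
    simp only [Function.iterate_succ_apply']
    exact (hσ (σ^[k] ⟨e, he⟩)).symm
  have hcl : tgt (w (m-1)) = src (w 0) := by
    have := hstep (m-1)
    rw [show m - 1 + 1 = m by omega] at this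
    rw [this, hwdef]
    simp [hper]
  obtain ⟨c, ⟨i, hi⟩, _⟩ := walk_cycle src tgt m hm w (fun k _ => hstep k) hcl
  exact ⟨c, i, by rw [hi, hwdef]; simp⟩

/-! ### Consequences of the hypothesis on cycles -/

theorem src_image_range {V E : Type} (src tgt : E → V) (c : DirCycle src tgt) :
    src '' Set.range c.edge = Set.range c.vtx := by
  rw [← Set.range_comp]
  exact congrArg Set.range (funext c.edge_src)

theorem key_of_h {V E : Type} [Fintype V] [Fintype E] (src tgt : E → V)
    (h : {C : Set E | IsCycle src tgt C}.ncard = strongCyclePacking src tgt) :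
    ∀ c d : DirCycle src tgt, (∃ v, v ∈ Set.range c.vtx ∧ v ∈ Set.range d.vtx) →
      Set.range c.edge = Set.range d.edge := by
  classical
  set S := {C : Set E | IsCycle src tgt C} with hS
  have hSfin : S.Finite := Set.toFinite _
  have hnonempty : ∀ c : DirCycle src tgt, (src '' Set.range c.edge).Nonempty := by
    intro c
    exact ⟨src (c.edge 0), Set.mem_image_of_mem _ ⟨0, rfl⟩⟩
  have hinj : ∀ (k : ℕ) (f : Fin k → Set E), (∀ i, IsCycle src tgt (f i)) →
      (∀ i j, i ≠ j → Disjoint (src '' f i) (src '' f j)) → Function.Injective f := by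
    intro k f hf hdisj i j hij
    by_contra hne
    obtain ⟨c, hc⟩ := hf i
    have hd := hdisj i j hne
    rw [← hij] at hd
    have h2 : src '' f i = ∅ := disjoint_self.mp hd
    have h3 := hnonempty c
    rw [← hc, h2] at h3
    exact Set.not_nonempty_empty h3
  have hbdd : BddAbove {k | ∃ f : Fin k → Set E, (∀ i, IsCycle src tgt (f i)) ∧
      ∀ i j, i ≠ j → Disjoint (src '' f i) (src '' f j)} := by
    refine ⟨S.ncard, fun k hk => ?_⟩
    obtain ⟨f, hf, hdisj⟩ := hk
    have hfi : Function.Injective f := hinj k f hf hdisj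
    have hg : Function.Injective (fun i : Fin k => (⟨f i, hf i⟩ : ↥S)) := by
      intro i j hij
      exact hfi (congrArg Subtype.val hij)
    calc k = Nat.card (Fin k) := by simp [Nat.card_eq_fintype_card]
      _ ≤ Nat.card ↥S := Nat.card_le_card_of_injective _ hg
      _ = S.ncard := Nat.card_coe_set_eq S
  have hne : {k | ∃ f : Fin k → Set E, (∀ i, IsCycle src tgt (f i)) ∧
      ∀ i j, i ≠ j → Disjoint (src '' f i) (src '' f j)}.Nonempty :=
    ⟨0, Fin.elim0, fun i => i.elim0, fun i => i.elim0⟩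
  have hmem := Nat.sSup_mem hne hbdd
  obtain ⟨f, hf, hdisj⟩ := hmem
  set k0 := strongCyclePacking src tgt with hk0
  have hfi : Function.Injective f := hinj _ f hf hdisj
  have hg : Function.Injective (fun i : Fin k0 => (⟨f i, hf i⟩ : ↥S)) := by
    intro i j hij
    exact hfi (congrArg Subtype.val hij)
  have hcards : Nat.card (Fin k0) = Nat.card ↥S := by
    rw [Nat.card_eq_fintype_card, Fintype.card_fin, Nat.card_coe_set_eq S, h]
  have hsurj : Function.Surjective (fun i : Fin k0 => (⟨f i, hf i⟩ : ↥S)) :=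
    ((Nat.bijective_iff_injective_and_card _).mpr ⟨hg, hcards⟩).2
  intro c d ⟨v, hvc, hvd⟩
  obtain ⟨i, hi⟩ := hsurj ⟨Set.range c.edge, ⟨c, rfl⟩⟩
  obtain ⟨j, hj⟩ := hsurj ⟨Set.range d.edge, ⟨d, rfl⟩⟩
  have hi' : f i = Set.range c.edge := congrArg Subtype.val hi
  have hj' : f j = Set.range d.edge := congrArg Subtype.val hj
  by_cases hij : i = j
  · rw [← hi', hij, hj']
  · exfalso
    have hd := hdisj i j hij
    have hv1 : v ∈ src '' f i := by
      rw [hi', src_image_range]; exact hvc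
    have hv2 : v ∈ src '' f j := by
      rw [hj', src_image_range]; exact hvd
    exact Set.disjoint_left.mp hd hv1 hv2

theorem at_most_one {V E : Type} [Fintype E] [DecidableEq V] [DecidableEq E]
    (src tgt : E → V) (H : Finset E)
    (bal : ∀ v, (H.filter fun e => tgt e = v).card = (H.filter fun e => src e = v).card)
    (hkey : ∀ c d : DirCycle src tgt, (∃ v, v ∈ Set.range c.vtx ∧ v ∈ Set.range d.vtx) →
      Set.range c.edge = Set.range d.edge)
    {e1 e2 : E} (h1 : e1 ∈ H) (h2 : e2 ∈ H) (hsrc : src e1 = src e2) : e1 = e2 := by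
  obtain ⟨c1, i1, hi1⟩ := cycle_through src tgt H bal h1
  obtain ⟨c2, i2, hi2⟩ := cycle_through src tgt H bal h2
  have hv1 : src e1 ∈ Set.range c1.vtx := ⟨i1, by rw [← c1.edge_src i1, hi1]⟩
  have hv2 : src e1 ∈ Set.range c2.vtx := ⟨i2, by rw [← c2.edge_src i2, hi2, hsrc]⟩
  have hr := hkey c1 c2 ⟨src e1, hv1, hv2⟩
  have he2 : e2 ∈ Set.range c1.edge := by rw [hr]; exact ⟨i2, hi2⟩
  obtain ⟨j, hj⟩ := he2
  have hvv : c1.vtx i1 = c1.vtx j := by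
    rw [← c1.edge_src i1, ← c1.edge_src j, hi1, hj, hsrc]
  have hij := c1.vtx_inj hvv
  rw [← hi1, ← hj, hij]

/-- Reversal of a directed cycle. -/
def DirCycle.rev {V E : Type} {src tgt : E → V} (c : DirCycle src tgt) : DirCycle tgt src where
  n := c.n
  vtx := fun i => c.vtx (-i)
  edge := fun i => c.edge (-i - 1)
  vtx_inj := fun i j hij => neg_injective (c.vtx_inj hij)
  edge_src := fun i => by rw [c.edge_tgt]; congr 1; ring
  edge_tgt := fun i => by rw [c.edge_src]; congr 1; ring

theorem rev_edge_range {V E : Type} {src tgt : E → V} (c : DirCycle src tgt) :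
    Set.range c.rev.edge = Set.range c.edge := by
  have hs : Function.Surjective (fun i : ZMod (c.n + 1) => -i - 1) :=
    fun i => ⟨-i - 1, by ring⟩
  exact hs.range_comp c.edge

theorem rev_vtx_range {V E : Type} {src tgt : E → V} (c : DirCycle src tgt) :
    Set.range c.rev.vtx = Set.range c.vtx := by
  have hs : Function.Surjective (fun i : ZMod (c.n + 1) => -i) := fun i => ⟨-i, by ring⟩
  exact hs.range_comp c.vtx

/-! ### The main theorem -/

theorem stmt5 {V E : Type} [Fintype V] [Fintype E] [DecidableEq V] [DecidableEq E]
    (src tgt : E → V)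
    (h : {C : Set E | IsCycle src tgt C}.ncard = strongCyclePacking src tgt) :
    zeroLocus (incidenceIdeal ℤ src tgt) = zeroLocus (strongIncidenceIdeal ℤ src tgt) := by
  classical
  have hkey := key_of_h src tgt h
  have hkey' : ∀ c d : DirCycle tgt src, (∃ v, v ∈ Set.range c.vtx ∧ v ∈ Set.range d.vtx) →
      Set.range c.edge = Set.range d.edge := by
    intro c d hv
    have h2 := hkey c.rev d.rev (by
      obtain ⟨v, hvc, hvd⟩ := hv
      refine ⟨v, ?_, ?_⟩
      · rw [rev_vtx_range]; exact hvc
      · rw [rev_vtx_range]; exact hvd)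
    rw [rev_edge_range, rev_edge_range] at h2
    exact h2
  ext p
  show (∀ f ∈ incidenceIdeal ℤ src tgt, MvPolynomial.aeval p f = 0) ↔
    (∀ f ∈ strongIncidenceIdeal ℤ src tgt, MvPolynomial.aeval p f = 0)
  constructor
  · -- hard direction
    intro hp
    -- the multisets of values of p on edges out of / into v
    set A : V → Multiset ℂ := fun v => ((Finset.univ.filter fun x => src x = v).val.map p)
      with hA
    set B : V → Multiset ℂ := fun v => ((Finset.univ.filter fun x => tgt x = v).val.map p)
      with hB
    have hesymm : ∀ v l, (A v).esymm l = (B v).esymm l := by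
      intro v l
      cases l with
      | zero => rw [esymm_zero', esymm_zero']
      | succ l =>
        have hg := hp _ (Ideal.subset_span ⟨v, l+1, by omega, rfl⟩)
        rw [map_sub, sub_eq_zero, aeval_esymmOf, aeval_esymmOf] at hg
        exact hg
    set H : Finset E := Finset.univ.filter (fun e => p e ≠ 0) with hH
    have hAcard : ∀ v, Multiset.card ((A v).filter (fun x => x ≠ 0))
        = (H.filter fun e => src e = v).card := by
      intro v
      rw [hA]
      rw [Multiset.filter_map, Multiset.card_map]
      show Multiset.card (((Finset.univ.filter fun x => src x = v).filter
        (fun e => p e ≠ 0)).val) = _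
      rw [← Finset.card_def, Finset.filter_comm]
    have hBcard : ∀ v, Multiset.card ((B v).filter (fun x => x ≠ 0))
        = (H.filter fun e => tgt e = v).card := by
      intro v
      rw [hB]
      rw [Multiset.filter_map, Multiset.card_map]
      show Multiset.card (((Finset.univ.filter fun x => tgt x = v).filter
        (fun e => p e ≠ 0)).val) = _
      rw [← Finset.card_def, Finset.filter_comm]
    have bal : ∀ v, (H.filter fun e => tgt e = v).card = (H.filter fun e => src e = v).card := by
      intro v
      rw [← hAcard, ← hBcard]
      exact card_filter_ne_of_esymm_eq (fun l => (hesymm v l).symm)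
    have bal' : ∀ v, (H.filter fun e => src e = v).card = (H.filter fun e => tgt e = v).card :=
      fun v => (bal v).symm
    have hout : ∀ v, (H.filter fun e => src e = v).card ≤ 1 := by
      intro v
      rw [Finset.card_le_one]
      intro a ha b hb
      obtain ⟨haH, hav⟩ := Finset.mem_filter.mp ha
      obtain ⟨hbH, hbv⟩ := Finset.mem_filter.mp hb
      exact at_most_one src tgt H bal hkey haH hbH (by rw [hav, hbv])
    have hin : ∀ v, (H.filter fun e => tgt e = v).card ≤ 1 := by
      intro v
      rw [Finset.card_le_one]
      intro a ha b hb
      obtain ⟨haH, hav⟩ := Finset.mem_filter.mp ha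
      obtain ⟨hbH, hbv⟩ := Finset.mem_filter.mp hb
      exact at_most_one tgt src H bal' hkey' haH hbH (by rw [hav, hbv])
    -- now every strong generator vanishes
    intro f hf
    have hker : strongIncidenceIdeal ℤ src tgt ≤
        RingHom.ker ((MvPolynomial.aeval p : MvPolynomial E ℤ →ₐ[ℤ] ℂ) :
          MvPolynomial E ℤ →+* ℂ) := by
      rw [strongIncidenceIdeal]
      rw [Ideal.span_le]
      rintro g (⟨v, rfl⟩ | ⟨v, l, hl, (rfl | rfl)⟩)
      · exact hp _ (Ideal.subset_span ⟨v, 1, le_refl 1, rfl⟩)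
      · show MvPolynomial.aeval p _ = 0
        rw [aeval_esymmOf]
        rw [← esymm_filter]
        apply esymm_eq_zero_of_lt
        calc Multiset.card ((A v).filter (fun x => x ≠ 0))
            = (H.filter fun e => src e = v).card := hAcard v
          _ ≤ 1 := hout v
          _ < l := by omega
      · show MvPolynomial.aeval p _ = 0
        rw [aeval_esymmOf]
        rw [← esymm_filter]
        apply esymm_eq_zero_of_lt
        calc Multiset.card ((B v).filter (fun x => x ≠ 0))
            = (H.filter fun e => tgt e = v).card := hBcard v
          _ ≤ 1 := hin v
          _ < l := by omega
    exact hker hf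
  · -- easy direction
    intro hp f hf
    have hsub : incidenceIdeal ℤ src tgt ≤ strongIncidenceIdeal ℤ src tgt := by
      rw [incidenceIdeal, Ideal.span_le]
      rintro g ⟨v, l, hl, rfl⟩
      by_cases hl1 : l = 1
      · subst hl1
        exact Ideal.subset_span (Or.inl ⟨v, rfl⟩)
      · have hl2 : 2 ≤ l := by omega
        exact Ideal.sub_mem _
          (Ideal.subset_span (Or.inr ⟨v, l, hl2, Or.inl rfl⟩))
          (Ideal.subset_span (Or.inr ⟨v, l, hl2, Or.inr rfl⟩))
    exact hp f (hsub hf)
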